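/- Let α₁, α₂, α₃, α₄ > 0 and set ℓ_min = max(α₁ + α₂, α₃ + α₄). (a) If u₁, u₂ ∈ ℝ³ are future time-like, u₃, u₄ ∈ ℝ³ are past time-like, u_i ∘ u_i = α_i² for all i, and u₁ + u₂ + u₃ + u₄ = 0, then u₁ + u₂ is future time-like and its Minkowski norm satisfies √((u₁+u₂) ∘ (u₁+u₂)) ≥ ℓ_min. (b) Conversely, for every real ℓ ≥ ℓ_min there exist such vectors u₁, u₂, u₃, u₄ with √((u₁+u₂) ∘ (u₁+u₂)) = ℓ. Hence the Minkowski length of the diagonal u₁ + u₂ takes exactly the values in the unbounded interval [ℓ_min, ∞). -/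

import Mathlib

/-! The orthogonal complement of a time-like vector is space-like, which gives the
reverse Cauchy–Schwarz inequality `(u ∘ u) (v ∘ v) ≤ (u ∘ v)²` and hence, for two future time-like
vectors, the reverse triangle inequality `‖u‖ + ‖v‖ ≤ ‖u + v‖`. Applied to `u₁ + u₂` and to
`-(u₁ + u₂) = (-u₃) + (-u₄)` it gives the lower bound `ℓ_min`. Conversely, for `ℓ ≥ α + β` two future
time-like vectors of norms `α, β` summing to `(0, 0, ℓ)` are found in the plane `y = 0`: their
time components `t` and `ℓ - t` are forced by the norms, and `t ≥ α`, `ℓ - t ≥ β` by `ℓ ≥ α + β`. -/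

/-- The Minkowski inner product on `ℝ³ = ℝ × ℝ × ℝ`. -/
def mink (v w : ℝ × ℝ × ℝ) : ℝ :=
  -(v.1 * w.1) - v.2.1 * w.2.1 + v.2.2 * w.2.2

def IsFutureTimelike (u : ℝ × ℝ × ℝ) : Prop :=
  0 < mink u u ∧ 0 < u.2.2

section Minkowski

variable {u v w : ℝ × ℝ × ℝ}

theorem mink_neg_neg (u v : ℝ × ℝ × ℝ) : mink (-u) (-v) = mink u v := by
  simp only [mink, Prod.fst_neg, Prod.snd_neg]; ring

theorem mink_add_add_self (u v : ℝ × ℝ × ℝ) :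
    mink (u + v) (u + v) = mink u u + 2 * mink u v + mink v v := by
  simp only [mink, Prod.fst_add, Prod.snd_add]; ring

theorem isFutureTimelike_neg_iff : IsFutureTimelike (-u) ↔ 0 < mink u u ∧ u.2.2 < 0 := by
  simp only [IsFutureTimelike, mink_neg_neg, Prod.snd_neg, Left.neg_pos_iff]

theorem mink_self_nonpos_of_mink_eq_zero (hu : 0 < mink u u) (hw : mink u w = 0) :
    mink w w ≤ 0 := by
  obtain ⟨a, b, c⟩ := u
  obtain ⟨p, q, r⟩ := w
  simp only [mink] at *
  have hcr : (c * r) ^ 2 ≤ (a ^ 2 + b ^ 2) * (p ^ 2 + q ^ 2) := by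
    rw [show c * r = a * p + b * q by linarith]
    nlinarith [sq_nonneg (a * q - b * p)]
  have hc : 0 < c ^ 2 := by nlinarith
  have hscaled : c ^ 2 * (r ^ 2 - p ^ 2 - q ^ 2) ≤ 0 := by
    nlinarith [mul_le_mul_of_nonneg_right hu.le (by positivity : (0 : ℝ) ≤ p ^ 2 + q ^ 2)]
  nlinarith

/-- Reverse Cauchy–Schwarz inequality. -/
theorem mink_self_mul_mink_self_le_sq (hu : 0 < mink u u) (v : ℝ × ℝ × ℝ) :
    mink u u * mink v v ≤ mink u v ^ 2 := by
  -- `w` is orthogonal to `u`, hence space-like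
  set w := mink u u • v - mink u v • u
  have hw : mink w w = mink u u * (mink u u * mink v v - mink u v ^ 2) := by
    simp only [w, mink, Prod.fst_sub, Prod.snd_sub, Prod.smul_fst, Prod.smul_snd, smul_eq_mul]
    ring
  have hw_nonpos : mink w w ≤ 0 :=
    mink_self_nonpos_of_mink_eq_zero hu (by
      simp only [w, mink, Prod.fst_sub, Prod.snd_sub, Prod.smul_fst, Prod.smul_snd, smul_eq_mul]
      ring)
  nlinarith

theorem IsFutureTimelike.mink_pos (hu : IsFutureTimelike u) (hv : IsFutureTimelike v) :
    0 < mink u v := by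
  obtain ⟨a, b, c⟩ := u
  obtain ⟨d, e, f⟩ := v
  obtain ⟨hu, hc⟩ := hu
  obtain ⟨hv, hf⟩ := hv
  simp only [mink] at *
  have hspace : (a * d + b * e) ^ 2 < (c * f) ^ 2 := by
    nlinarith [sq_nonneg (a * e - b * d), mul_lt_mul'' (by linarith : a * a + b * b < c * c)
      (by linarith : d * d + e * e < f * f)
      (add_nonneg (mul_self_nonneg a) (mul_self_nonneg b))
      (add_nonneg (mul_self_nonneg d) (mul_self_nonneg e))]
  linarith [(abs_lt_of_sq_lt_sq' hspace (mul_pos hc hf).le).2]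

theorem IsFutureTimelike.add (hu : IsFutureTimelike u) (hv : IsFutureTimelike v) :
    IsFutureTimelike (u + v) := by
  refine ⟨?_, by simpa only [Prod.snd_add] using add_pos hu.2 hv.2⟩
  rw [mink_add_add_self]
  nlinarith [hu.1, hv.1, hu.mink_pos hv]

theorem IsFutureTimelike.sqrt_mul_sqrt_le_mink (hu : IsFutureTimelike u)
    (hv : IsFutureTimelike v) : √(mink u u) * √(mink v v) ≤ mink u v := by
  rw [← Real.sqrt_mul hu.1.le, ← Real.sqrt_sq (hu.mink_pos hv).le]
  exact Real.sqrt_le_sqrt (mink_self_mul_mink_self_le_sq hu.1 v)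

/-- Reverse triangle inequality. -/
theorem IsFutureTimelike.sqrt_add_sqrt_le (hu : IsFutureTimelike u) (hv : IsFutureTimelike v) :
    √(mink u u) + √(mink v v) ≤ √(mink (u + v) (u + v)) := by
  apply Real.le_sqrt_of_sq_le
  rw [add_sq, Real.sq_sqrt hu.1.le, Real.sq_sqrt hv.1.le, mink_add_add_self]
  nlinarith [hu.sqrt_mul_sqrt_le_mink hv]

end Minkowski

theorem exists_isFutureTimelike_add_eq {α β ℓ : ℝ} (hα : 0 < α) (hβ : 0 < β)
    (hℓ : α + β ≤ ℓ) :
    ∃ u v : ℝ × ℝ × ℝ, IsFutureTimelike u ∧ IsFutureTimelike v ∧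
      mink u u = α ^ 2 ∧ mink v v = β ^ 2 ∧ u + v = (0, 0, ℓ) := by
  have hℓ0 : 0 < ℓ := by linarith
  obtain ⟨t, ht⟩ : ∃ t, 2 * ℓ * t = ℓ ^ 2 + α ^ 2 - β ^ 2 :=
    ⟨(ℓ ^ 2 + α ^ 2 - β ^ 2) / (2 * ℓ), by field_simp⟩
  -- `α ≤ t` and `β ≤ ℓ - t` amount to `β ^ 2 ≤ (ℓ - α) ^ 2` and `α ^ 2 ≤ (ℓ - β) ^ 2`
  have hαt : α ≤ t := by nlinarith
  have hβt : β ≤ ℓ - t := by nlinarith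
  set x := √(t ^ 2 - α ^ 2)
  have hx : x ^ 2 = t ^ 2 - α ^ 2 := Real.sq_sqrt (by nlinarith)
  have hu : mink (x, 0, t) (x, 0, t) = α ^ 2 := by
    simp only [mink]; linear_combination -hx
  have hv : mink (-x, 0, ℓ - t) (-x, 0, ℓ - t) = β ^ 2 := by
    simp only [mink]; linear_combination -hx - ht
  refine ⟨(x, 0, t), (-x, 0, ℓ - t), ⟨by rw [hu]; positivity, by dsimp; linarith⟩,
    ⟨by rw [hv]; positivity, by dsimp; linarith⟩, hu, hv, ?_⟩
  simp

/-- For closed Minkowski quadrilaterals with two future time-like sides of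
lengths `α₁, α₂` and two past time-like sides of lengths `α₃, α₄`, the
diagonal `u₁ + u₂` is future time-like of Minkowski length at least
`ℓ_min = max (α₁ + α₂) (α₃ + α₄)`, and conversely every length
`ℓ ≥ ℓ_min` is attained; so the diagonal length ranges over `[ℓ_min, ∞)`. -/
theorem stmt_18 (α₁ α₂ α₃ α₄ : ℝ)
    (h1 : 0 < α₁) (h2 : 0 < α₂) (h3 : 0 < α₃) (h4 : 0 < α₄) :
    (∀ u₁ u₂ u₃ u₄ : ℝ × ℝ × ℝ,
      (0 < mink u₁ u₁ ∧ 0 < u₁.2.2) → (0 < mink u₂ u₂ ∧ 0 < u₂.2.2) →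
      (0 < mink u₃ u₃ ∧ u₃.2.2 < 0) → (0 < mink u₄ u₄ ∧ u₄.2.2 < 0) →
      mink u₁ u₁ = α₁ ^ 2 → mink u₂ u₂ = α₂ ^ 2 →
      mink u₃ u₃ = α₃ ^ 2 → mink u₄ u₄ = α₄ ^ 2 →
      u₁ + u₂ + u₃ + u₄ = 0 →
      (0 < mink (u₁ + u₂) (u₁ + u₂) ∧ 0 < (u₁ + u₂).2.2 ∧
        max (α₁ + α₂) (α₃ + α₄) ≤ Real.sqrt (mink (u₁ + u₂) (u₁ + u₂)))) ∧
    (∀ ℓ : ℝ, max (α₁ + α₂) (α₃ + α₄) ≤ ℓ →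
      ∃ u₁ u₂ u₃ u₄ : ℝ × ℝ × ℝ,
        (0 < mink u₁ u₁ ∧ 0 < u₁.2.2) ∧ (0 < mink u₂ u₂ ∧ 0 < u₂.2.2) ∧
        (0 < mink u₃ u₃ ∧ u₃.2.2 < 0) ∧ (0 < mink u₄ u₄ ∧ u₄.2.2 < 0) ∧
        mink u₁ u₁ = α₁ ^ 2 ∧ mink u₂ u₂ = α₂ ^ 2 ∧
        mink u₃ u₃ = α₃ ^ 2 ∧ mink u₄ u₄ = α₄ ^ 2 ∧
        u₁ + u₂ + u₃ + u₄ = 0 ∧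
        Real.sqrt (mink (u₁ + u₂) (u₁ + u₂)) = ℓ) := by
  constructor
  · intro u₁ u₂ u₃ u₄ hu₁ hu₂ hu₃ hu₄ e₁ e₂ e₃ e₄ hsum
    rw [← isFutureTimelike_neg_iff] at hu₃ hu₄
    rw [← mink_neg_neg] at e₃ e₄
    have hdiag : -u₃ + -u₄ = u₁ + u₂ := by
      rw [← neg_add, neg_eq_iff_add_eq_zero, ← hsum]; abel
    have hd : IsFutureTimelike (u₁ + u₂) := IsFutureTimelike.add hu₁ hu₂
    have h₁₂ := IsFutureTimelike.sqrt_add_sqrt_le hu₁ hu₂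
    have h₃₄ := hu₃.sqrt_add_sqrt_le hu₄
    rw [e₁, e₂, Real.sqrt_sq h1.le, Real.sqrt_sq h2.le] at h₁₂
    rw [e₃, e₄, Real.sqrt_sq h3.le, Real.sqrt_sq h4.le, hdiag] at h₃₄
    exact ⟨hd.1, hd.2, max_le h₁₂ h₃₄⟩
  · intro ℓ hℓ
    obtain ⟨u₁, u₂, hu₁, hu₂, e₁, e₂, hsum₁₂⟩ :=
      exists_isFutureTimelike_add_eq h1 h2 (le_of_max_le_left hℓ)
    obtain ⟨v₃, v₄, hv₃, hv₄, e₃, e₄, hsum₃₄⟩ :=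
      exists_isFutureTimelike_add_eq h3 h4 (le_of_max_le_right hℓ)
    rw [← neg_neg v₃, isFutureTimelike_neg_iff] at hv₃
    rw [← neg_neg v₄, isFutureTimelike_neg_iff] at hv₄
    refine ⟨u₁, u₂, -v₃, -v₄, hu₁, hu₂, hv₃, hv₄, e₁, e₂, by rwa [mink_neg_neg],
      by rwa [mink_neg_neg], ?_, ?_⟩
    · rw [add_assoc, ← neg_add, hsum₁₂, hsum₃₄, add_neg_cancel]
    · have hℓ0 : 0 ≤ ℓ := by linarith [le_of_max_le_left hℓ]
      rw [hsum₁₂, show mink (0, 0, ℓ) (0, 0, ℓ) = ℓ ^ 2 by simp only [mink]; ring,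
        Real.sqrt_sq hℓ0]
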